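/- Let Ψ_H = (1/√3)(|↑↑⟩ + |↓↑⟩ + |↑↓⟩) in ℂ²⊗ℂ², and let m = |↑⟩ − |↓⟩ in ℂ². Then the Sasaki projection of the line spanned by Ψ_H onto the subspace span(m)⊗ℂ² equals the line spanned by m⊗|↓⟩; i.e. (span(m)⊗ℂ²) ⊓ (span(Ψ_H) ⊔ (span(m)⊗ℂ²)ᗮ) = span(m⊗|↓⟩). -/

import Mathlib

/-!
If `v ∈ Q` and `ψ - v ⊥ Q`, then `Q ⊓ (span{ψ} ⊔ Qᗮ) = span{v}`: an element `cψ + z` of `Q` with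
`z ⊥ Q` differs from `c v` by `c (ψ - v) + z`, which lies in `Q ⊓ Qᗮ = 0`. For the Hardy state,
`√3 Ψ_H = (|↑⟩ + |↓⟩) ⊗ (|↑⟩ + ½|↓⟩) + ½ m ⊗ |↓⟩`, and `|↑⟩ + |↓⟩ ⊥ m`, so `v = ½ m ⊗ |↓⟩`.
-/

noncomputable section

/-- The qubit space ℂ². -/
abbrev Qubit : Type := EuclideanSpace ℂ (Fin 2)

/-- Two-qubit space, modelling ℂ² ⊗ ℂ². -/
abbrev Qubit2 : Type := EuclideanSpace ℂ (Fin 2 × Fin 2)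

/-- Standard basis vector `|i⟩` of ℂ². -/
def e (i : Fin 2) : Qubit := EuclideanSpace.single i 1

/-- The tensor product of two qubit vectors, as an element of `Qubit2`. -/
def tp (v w : Qubit) : Qubit2 := WithLp.toLp 2 (fun p : Fin 2 × Fin 2 => v p.1 * w p.2)

open Submodule

section Sasaki

variable {𝕜 E : Type*} [RCLike 𝕜] [NormedAddCommGroup E] [InnerProductSpace 𝕜 E]

/-- The Sasaki projection `P & Q` of `P` onto `Q`. -/
def sasaki (P Q : Submodule 𝕜 E) : Submodule 𝕜 E := Q ⊓ (P ⊔ Qᗮ)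

theorem sasaki_span_singleton_eq {Q : Submodule 𝕜 E} {ψ v : E} (hv : v ∈ Q)
    (hψv : ψ - v ∈ Qᗮ) : sasaki (𝕜 ∙ ψ) Q = 𝕜 ∙ v := by
  apply le_antisymm
  · rintro x ⟨hxQ, hx⟩
    obtain ⟨y, hy, z, hz, rfl⟩ := mem_sup.mp hx
    obtain ⟨c, rfl⟩ := mem_span_singleton.mp hy
    have hQ : c • ψ + z - c • v ∈ Q := Q.sub_mem hxQ (Q.smul_mem c hv)
    have hQperp : c • ψ + z - c • v ∈ Qᗮ := by
      rw [show c • ψ + z - c • v = c • (ψ - v) + z by rw [smul_sub]; abel]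
      exact Qᗮ.add_mem (Qᗮ.smul_mem c hψv) hz
    have h0 : c • ψ + z - c • v = 0 := by
      simpa [Q.inf_orthogonal_eq_bot] using mem_inf.mpr ⟨hQ, hQperp⟩
    exact mem_span_singleton.mpr ⟨c, (sub_eq_zero.mp h0).symm⟩
  · rw [span_singleton_le_iff_mem]
    refine ⟨hv, ?_⟩
    rw [show v = ψ + -(ψ - v) by abel]
    exact add_mem_sup (mem_span_singleton_self ψ) (Qᗮ.neg_mem hψv)

end Sasaki

theorem inner_tp (a b c d : Qubit) : inner ℂ (tp a b) (tp c d) = inner ℂ a c * inner ℂ b d := by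
  simp only [tp, PiLp.inner_apply, Fintype.sum_prod_type, Finset.sum_mul_sum]
  refine Finset.sum_congr rfl fun i _ => Finset.sum_congr rfl fun j _ => ?_
  simp only [RCLike.inner_apply, map_mul]
  ring

theorem tp_mem_orthogonal_span_pair {a m : Qubit} (ham : inner ℂ m a = 0) (w u v : Qubit) :
    tp a w ∈ (span ℂ {tp m u, tp m v})ᗮ := by
  refine (isOrtho_span.mpr ?_).le (mem_span_singleton_self (tp a w))
  rintro _ rfl _ (rfl | rfl) <;> simp [inner_tp, inner_eq_zero_symm.mp ham]

/-- Hardy state: with up = |↑⟩ = e 0, down = |↓⟩ = e 1,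
Ψ_H = (1/√3)(|↑↑⟩ + |↓↑⟩ + |↑↓⟩). The Sasaki projection of span(Ψ_H) onto
span(m) ⊗ ℂ², where m = |↑⟩ − |↓⟩, is the line spanned by m ⊗ |↓⟩. -/
theorem hardy_sasaki :
    let up : Qubit := e 0
    let down : Qubit := e 1
    let m : Qubit := up - down
    let Ψ : Qubit2 := ((Real.sqrt 3 : ℂ))⁻¹ •
      (tp up up + tp down up + tp up down)
    let Q : Submodule ℂ Qubit2 := Submodule.span ℂ {tp m up, tp m down}
    Q ⊓ (Submodule.span ℂ {Ψ} ⊔ Qᗮ) = Submodule.span ℂ {tp m down} := by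
  intro up down m Ψ Q
  have hspan : ℂ ∙ Ψ = ℂ ∙ (tp up up + tp down up + tp up down) :=
    span_singleton_smul_eq (by simp) _
  have hdecomp : tp up up + tp down up + tp up down - (2⁻¹ : ℂ) • tp m down =
      tp (up + down) up + (2⁻¹ : ℂ) • tp (up + down) down := by
    ext ⟨i, j⟩
    fin_cases i <;> fin_cases j <;> norm_num [m, up, down, tp, e]
  have hperp : inner ℂ m (up + down) = 0 := by
    simp [m, up, down, e, EuclideanSpace.inner_single_left]
  have hv : (2⁻¹ : ℂ) • tp m down ∈ Q := Q.smul_mem _ (subset_span (by simp))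
  have hψv : tp up up + tp down up + tp up down - (2⁻¹ : ℂ) • tp m down ∈ Qᗮ := by
    rw [hdecomp]
    exact Qᗮ.add_mem (tp_mem_orthogonal_span_pair hperp _ _ _)
      (Qᗮ.smul_mem _ (tp_mem_orthogonal_span_pair hperp _ _ _))
  change sasaki (ℂ ∙ Ψ) Q = _
  rw [hspan, sasaki_span_singleton_eq hv hψv, span_singleton_smul_eq (by simp)]
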